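/- Let t ≥ 4 be an integer and let d₁,…,d_t, e₁,…,e_t, n₁,…,n_t be integers with e_i ≥ 1, n_i ≥ 1 and d_i ≥ 2e_i for all i. Define the integer φ(d,e,n) := ∏_{i=1}^{t} C(d_i+n_i, n_i) − ∏_{i=1}^{t} C(d_i−2e_i+n_i, n_i) − ( ∏_{i=1}^{t} C(e_i+n_i, n_i) − 1 )·( Σ_{i=1}^{t} n_i + 1 ). Then φ(d,e,n) ≥ 0. -/

import Mathlib

/-!
Write `A, B, E, F` for the products of `C(dᵢ+nᵢ,nᵢ)`, `C(dᵢ-2eᵢ+nᵢ,nᵢ)`, `C(eᵢ+nᵢ,nᵢ)`,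
`C(2eᵢ+nᵢ,nᵢ)` and `S = ∑ nᵢ`, so that `φ = A - B - (E - 1)(S + 1)`.

* `x ↦ C(x+n,n) - 1` is superadditive, and a product of such factors satisfies
  `F + B ≤ A + 1` (split `dᵢ = 2eᵢ + (dᵢ - 2eᵢ)`).
* Coordinatewise `(n+2) C(e+n,n) ≤ 2 C(2e+n,n)`, and `2^t (S + 1) ≤ ∏ (nᵢ + 2)` once `t ≥ 4`;
  together `(S + 1) E ≤ F`.

Hence `φ ≥ A - B - F + S + 1 ≥ S ≥ 0`.
-/

open Finset

/-- φ(d,e,n) = ∏ᵢ C(dᵢ+nᵢ,nᵢ) − ∏ᵢ C(dᵢ−2eᵢ+nᵢ,nᵢ)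
    − (∏ᵢ C(eᵢ+nᵢ,nᵢ) − 1)(Σᵢ nᵢ + 1), as an integer. -/
def phi {t : ℕ} (d e n : Fin t → ℕ) : ℤ :=
  (∏ i, ((d i + n i).choose (n i) : ℤ))
    - (∏ i, ((d i - 2 * e i + n i).choose (n i) : ℤ))
    - ((∏ i, ((e i + n i).choose (n i) : ℤ)) - 1) * ((∑ i, (n i : ℤ)) + 1)

section OrderedRing

variable {ι R : Type*} [CommRing R] [LinearOrder R] [IsStrictOrderedRing R]

theorem Finset.prod_add_prod_le_prod_add_prod (s : Finset ι) {u v w z : ι → R}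
    (hz : ∀ i ∈ s, 0 ≤ z i) (hzu : ∀ i ∈ s, z i ≤ u i) (hzv : ∀ i ∈ s, z i ≤ v i)
    (huv : ∀ i ∈ s, u i + v i ≤ w i + z i) :
    ∏ i ∈ s, u i + ∏ i ∈ s, v i ≤ ∏ i ∈ s, w i + ∏ i ∈ s, z i := by
  induction s using Finset.cons_induction with
  | empty => simp
  | cons j s hj ih =>
    simp only [mem_cons, forall_eq_or_imp] at hz hzu hzv huv
    have hZ : 0 ≤ ∏ i ∈ s, z i := prod_nonneg hz.2
    have hZU : ∏ i ∈ s, z i ≤ ∏ i ∈ s, u i := prod_le_prod hz.2 hzu.2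
    have hZV : ∏ i ∈ s, z i ≤ ∏ i ∈ s, v i := prod_le_prod hz.2 hzv.2
    have IH := ih hz.2 hzu.2 hzv.2 huv.2
    simp only [prod_cons]
    -- with `U, V, W, Z` the products over `s`: `wⱼ W ≥ (uⱼ + vⱼ - zⱼ) W`, and then the excess
    -- over `uⱼ U + vⱼ V` is at least `zⱼ (W + Z - U - V) ≥ 0`
    nlinarith [mul_le_mul_of_nonneg_right huv.1 (hZ.trans (hZU.trans (by linarith))),
      mul_nonneg (sub_nonneg.2 hzu.1) (show 0 ≤ ∏ i ∈ s, w i - ∏ i ∈ s, u i by linarith),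
      mul_nonneg (sub_nonneg.2 hzv.1) (show 0 ≤ ∏ i ∈ s, w i - ∏ i ∈ s, v i by linarith),
      mul_nonneg hz.1 (sub_nonneg.2 IH)]

theorem Finset.pow_card_mul_add_sum_sub_le_mul_prod (s : Finset ι) {c : R} (hc : 0 ≤ c)
    {y : ι → R} (hy : ∀ i ∈ s, c ≤ y i) :
    c ^ #s * (c + ∑ i ∈ s, (y i - c)) ≤ c * ∏ i ∈ s, y i := by
  induction s using Finset.cons_induction with
  | empty => simp
  | cons j s hj ih =>
    simp only [mem_cons, forall_eq_or_imp] at hy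
    have IH := ih hy.2
    have hsum : 0 ≤ ∑ i ∈ s, (y i - c) := sum_nonneg fun i hi ↦ sub_nonneg.2 (hy.2 i hi)
    rw [card_cons, sum_cons, prod_cons, pow_succ]
    nlinarith [mul_le_mul_of_nonneg_left IH (hc.trans hy.1),
      mul_nonneg (mul_nonneg (sub_nonneg.2 hy.1) (pow_nonneg hc #s)) hsum]

end OrderedRing

theorem two_pow_mul_add_one_le_three_pow {t : ℕ} (ht : 4 ≤ t) : 2 ^ t * (t + 1) ≤ 3 ^ t := by
  induction t, ht using Nat.le_induction with
  | base => norm_num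
  | succ m _ ih => rw [pow_succ, pow_succ]; nlinarith [pow_pos (two_pos : 0 < 2) m]

theorem Finset.two_pow_card_mul_sum_add_one_le_prod_add_two {ι : Type*} (s : Finset ι)
    (hs : 4 ≤ #s) {n : ι → ℕ} (hn : ∀ i ∈ s, 1 ≤ n i) :
    2 ^ #s * (∑ i ∈ s, n i + 1) ≤ ∏ i ∈ s, (n i + 2) := by
  have hk := two_pow_mul_add_one_le_three_pow hs
  have hS : #s ≤ ∑ i ∈ s, n i := by simpa using s.card_nsmul_le_sum n 1 hn
  have key := s.pow_card_mul_add_sum_sub_le_mul_prod (c := (3 : ℤ)) (by norm_num)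
    (y := fun i ↦ (n i + 2 : ℤ)) fun i hi ↦ by have := hn i hi; omega
  simp only [sum_sub_distrib, sum_add_distrib, sum_const, nsmul_eq_mul] at key
  zify at hk hS ⊢
  -- `3ᵏ (S - k + 3) - 3 ⬝ 2ᵏ (S + 1) = (S - k)(3ᵏ - 3 ⬝ 2ᵏ) + 3 (3ᵏ - 2ᵏ (k + 1))`
  nlinarith [mul_nonneg (sub_nonneg.2 hS)
    (show (0 : ℤ) ≤ 3 ^ #s - 3 * 2 ^ #s by nlinarith [pow_pos (two_pos : (0 : ℤ) < 2) #s])]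

namespace Nat

theorem choose_add_add_choose_le (a b n : ℕ) :
    (a + n).choose n + (b + n).choose n ≤ (a + b + n).choose n + 1 := by
  induction b with
  | zero => simp
  | succ b ih =>
    rw [← add_assoc]
    suffices (b + 1 + n).choose n + (a + b + n).choose n ≤
        (a + b + 1 + n).choose n + (b + n).choose n by omega
    rcases n with _ | m
    · simp
    -- the increment `C(x + m + 2, m + 1) - C(x + m + 1, m + 1) = C(x + m + 1, m)` grows with `x`
    have h := choose_le_choose m (show b + (m + 1) ≤ a + b + (m + 1) by omega)
    simp only [fun x ↦ show x + 1 + (m + 1) = x + (m + 1) + 1 by omega, choose_succ_succ']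
    omega

theorem add_two_mul_choose_le {e : ℕ} (he : 1 ≤ e) (n : ℕ) :
    (n + 2) * (e + n).choose n ≤ 2 * (2 * e + n).choose n := by
  induction n with
  | zero => simp
  | succ m ih =>
    refine Nat.le_of_mul_le_mul_left ?_ m.succ_pos
    have k₁ := add_one_mul_choose_eq (e + m) m
    have k₂ := add_one_mul_choose_eq (2 * e + m) m
    rw [← add_assoc, ← add_assoc]
    -- `(m + 3)(e + m + 1) ≤ (m + 2)(2e + m + 1)` since the difference is `(e - 1)(m + 1)`
    calc (m + 1) * ((m + 1 + 2) * (e + m + 1).choose (m + 1))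
        = (m + 3) * ((e + m + 1) * (e + m).choose m) := by rw [k₁]; ring
      _ ≤ (2 * e + m + 1) * ((m + 2) * (e + m).choose m) := by
          rw [← mul_assoc, ← mul_assoc]
          gcongr ?_ * _
          nlinarith
      _ ≤ (2 * e + m + 1) * (2 * (2 * e + m).choose m) := by gcongr
      _ = (m + 1) * (2 * (2 * e + m + 1).choose (m + 1)) := by rw [← mul_left_comm, k₂]; ring

end Nat

theorem stmt_19 (t : ℕ) (ht : 4 ≤ t) (d e n : Fin t → ℕ)
    (he : ∀ i, 1 ≤ e i) (hn : ∀ i, 1 ≤ n i) (hd : ∀ i, 2 * e i ≤ d i) :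
    0 ≤ phi d e n := by
  have hsplit : ∏ i, ((2 * e i + n i).choose (n i) : ℤ)
      + ∏ i, ((d i - 2 * e i + n i).choose (n i) : ℤ)
      ≤ ∏ i, ((d i + n i).choose (n i) : ℤ) + ∏ _i : Fin t, (1 : ℤ) := by
    refine univ.prod_add_prod_le_prod_add_prod (fun _ _ ↦ zero_le_one) (fun i _ ↦ ?_)
      (fun i _ ↦ ?_) (fun i _ ↦ ?_) <;> norm_cast
    · exact Nat.choose_pos (by omega)
    · exact Nat.choose_pos (by omega)
    · simpa [Nat.add_sub_cancel' (hd i)] using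
        Nat.choose_add_add_choose_le (2 * e i) (d i - 2 * e i) (n i)
  have hweights : 2 ^ t * (∑ i, n i + 1) ≤ ∏ i, (n i + 2) := by
    simpa using univ.two_pow_card_mul_sum_add_one_le_prod_add_two (by simpa) fun i _ ↦ hn i
  have hcoord : (∏ i, (n i + 2)) * ∏ i, (e i + n i).choose (n i)
      ≤ 2 ^ t * ∏ i, (2 * e i + n i).choose (n i) := by
    have := prod_le_prod' fun i (_ : i ∈ univ) ↦ Nat.add_two_mul_choose_le (he i) (n i)
    rwa [prod_mul_distrib, prod_mul_distrib, prod_const, card_fin] at this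
  have hE : (∑ i, n i + 1) * ∏ i, (e i + n i).choose (n i)
      ≤ ∏ i, (2 * e i + n i).choose (n i) := by
    refine Nat.le_of_mul_le_mul_left ?_ (by positivity : 0 < 2 ^ t)
    rw [← mul_assoc]
    exact (Nat.mul_le_mul_right _ hweights).trans hcoord
  have hS : (0 : ℤ) ≤ ∑ i, (n i : ℤ) := sum_nonneg fun i _ ↦ by positivity
  zify at hE
  rw [prod_const_one] at hsplit
  unfold phi
  nlinarith
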